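/- arXiv:2006.02815 — 9 statements merged into one kernel-verified Lean document; each statement's English description precedes it below -/
import Mathlib

section
/- Let n, p, m be positive integers, let G ∈ ℝ^{n×n} and H ∈ ℝ^{p×p} be symmetric positive semidefinite matrices, let B ∈ ℝ^{m×p}, let β > 0, and let τ, θ ∈ ℝ satisfy τ + θ > 0 and τ ≤ 1. Then for all x ∈ ℝ^n, y ∈ ℝ^p, γ ∈ ℝ^m one has ⟨Gx, x⟩ + ⟨Hy, y⟩ + ((τ − τθ + θ)β/(τ+θ))‖By‖² − (2τ/(τ+θ))⟨By, γ⟩ + (1/((τ+θ)β))‖γ‖² ≥ 0; that is, the block matrix M = [[G, 0, 0], [0, H + ((τ−τθ+θ)β/(τ+θ))BᵀB, −(τ/(τ+θ))Bᵀ], [0, −(τ/(τ+θ))B, (1/((τ+θ)β))I]] is symmetric positive semidefinite. -/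
open Matrix

/-! Completing the square in `γ` turns the quadratic form into
`⟨Gx, x⟩ + ⟨Hy, y⟩ + β(1 - τ)‖By‖² + (1/((τ+θ)β))‖γ - τβ By‖²`,
a sum of nonnegative terms once `τ ≤ 1`. -/

lemma Matrix.PosSemidef.mulVec_dotProduct_self_nonneg {ι : Type*} [Fintype ι]
    {A : Matrix ι ι ℝ} (hA : A.PosSemidef) (x : ι → ℝ) : 0 ≤ A *ᵥ x ⬝ᵥ x := by
  simpa [dotProduct_comm] using hA.dotProduct_mulVec_nonneg x

lemma Matrix.dotProduct_self_nonneg {ι R : Type*} [Fintype ι] [Ring R] [LinearOrder R]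
    [IsOrderedRing R] (v : ι → R) : 0 ≤ v ⬝ᵥ v :=
  Finset.sum_nonneg fun i _ => mul_self_nonneg (v i)

lemma quadratic_form_eq_complete_square {ι : Type*} [Fintype ι] (u γ : ι → ℝ)
    {β τ θ : ℝ} (hβ : β ≠ 0) (hτθ : τ + θ ≠ 0) :
    (τ - τ * θ + θ) * β / (τ + θ) * (u ⬝ᵥ u) - 2 * τ / (τ + θ) * (u ⬝ᵥ γ)
        + 1 / ((τ + θ) * β) * (γ ⬝ᵥ γ)
      = β * (1 - τ) * (u ⬝ᵥ u)
        + 1 / ((τ + θ) * β) * ((γ - (τ * β) • u) ⬝ᵥ (γ - (τ * β) • u)) := by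
  simp only [sub_dotProduct, dotProduct_sub, smul_dotProduct, dotProduct_smul, smul_eq_mul,
    dotProduct_comm γ u]
  field_simp
  ring

theorem stmt0_general (n p m : ℕ)
    (G : Matrix (Fin n) (Fin n) ℝ) (H : Matrix (Fin p) (Fin p) ℝ)
    (B : Matrix (Fin m) (Fin p) ℝ)
    (hG : G.PosSemidef) (hH : H.PosSemidef)
    (β τ θ : ℝ) (hβ : 0 < β) (hτθ : 0 < τ + θ) (hτ : τ ≤ 1) :
    ∀ (x : Fin n → ℝ) (y : Fin p → ℝ) (γ : Fin m → ℝ),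
      (G *ᵥ x) ⬝ᵥ x + (H *ᵥ y) ⬝ᵥ y
        + ((τ - τ * θ + θ) * β / (τ + θ)) * ((B *ᵥ y) ⬝ᵥ (B *ᵥ y))
        - (2 * τ / (τ + θ)) * ((B *ᵥ y) ⬝ᵥ γ)
        + (1 / ((τ + θ) * β)) * (γ ⬝ᵥ γ) ≥ 0 := by
  intro x y γ
  have hsquare := quadratic_form_eq_complete_square (B *ᵥ y) γ hβ.ne' hτθ.ne'
  have hGx := hG.mulVec_dotProduct_self_nonneg x
  have hHy := hH.mulVec_dotProduct_self_nonneg y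
  have hBy : 0 ≤ β * (1 - τ) * (B *ᵥ y ⬝ᵥ B *ᵥ y) :=
    mul_nonneg (mul_nonneg hβ.le (sub_nonneg.2 hτ)) (dotProduct_self_nonneg _)
  have hγ : 0 ≤ 1 / ((τ + θ) * β) * ((γ - (τ * β) • B *ᵥ y) ⬝ᵥ (γ - (τ * β) • B *ᵥ y)) :=
    mul_nonneg (by positivity) (dotProduct_self_nonneg _)
  linarith

/-- The block matrix `M` of the symmetric proximal ADMM is positive
semidefinite: for symmetric PSD `G`, `H`, any `B`, `β > 0`, `τ + θ > 0`, `τ ≤ 1`,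
the quadratic form `⟨Gx,x⟩ + ⟨Hy,y⟩ + ((τ−τθ+θ)β/(τ+θ))‖By‖² − (2τ/(τ+θ))⟨By,γ⟩
+ (1/((τ+θ)β))‖γ‖²` is nonnegative. -/
theorem stmt0 (n p m : ℕ) (hn : 0 < n) (hp : 0 < p) (hm : 0 < m)
    (G : Matrix (Fin n) (Fin n) ℝ) (H : Matrix (Fin p) (Fin p) ℝ)
    (B : Matrix (Fin m) (Fin p) ℝ)
    (hG : G.PosSemidef) (hH : H.PosSemidef)
    (β τ θ : ℝ) (hβ : 0 < β) (hτθ : 0 < τ + θ) (hτ : τ ≤ 1) :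
    ∀ (x : Fin n → ℝ) (y : Fin p → ℝ) (γ : Fin m → ℝ),
      (G *ᵥ x) ⬝ᵥ x + (H *ᵥ y) ⬝ᵥ y
        + ((τ - τ * θ + θ) * β / (τ + θ)) * ((B *ᵥ y) ⬝ᵥ (B *ᵥ y))
        - (2 * τ / (τ + θ)) * ((B *ᵥ y) ⬝ᵥ γ)
        + (1 / ((τ + θ) * β)) * (γ ⬝ᵥ γ) ≥ 0 :=
  stmt0_general n p m G H B hG hH β τ θ hβ hτθ hτ
end

section
/- Let f : ℝ^n → ℝ and g : ℝ^p → ℝ be convex, let A ∈ ℝ^{m×n}, B ∈ ℝ^{m×p}, b ∈ ℝ^m. Suppose (x, y, γ) and (x', y', γ') are given, u, u' ∈ ℝ^n and v, v' ∈ ℝ^p satisfy: u + Aᵀγ is a subgradient of f at x, u' + Aᵀγ' is a subgradient of f at x', v + Bᵀγ is a subgradient of g at y, and v' + Bᵀγ' is a subgradient of g at y'. Set w = Ax + By − b and w' = Ax' + By' − b. Then ⟨u − u', x − x'⟩ + ⟨v − v', y − y'⟩ + ⟨w − w', γ − γ'⟩ ≥ 0, i.e. the operator T(x,y,γ) = (∂f(x)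 − Aᵀγ, ∂g(y) − Bᵀγ, Ax + By − b) is monotone. -/
open Matrix

/-! Each subgradient inequality, tested at the other point and summed with its partner, gives
monotonicity of the subdifferential. Applied to `f` at `x, x'` and to `g` at `y, y'` with the shifted
subgradients `u + Aᵀγ` and `v + Bᵀγ`, the two cross terms `⟨γ - γ', A(x - x')⟩` and
`⟨γ - γ', B(y - y')⟩` add up to exactly `⟨w - w', γ - γ'⟩`, since `w - w' = A(x - x') + B(y - y')`. -/

theorem Matrix.dotProduct_sub_sub_nonneg_of_subgradient {ι R : Type*} [Fintype ι] [CommRing R]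
    [PartialOrder R] [IsOrderedRing R] {f : (ι → R) → R} {x x' u u' : ι → R}
    (hu : ∀ z, f z ≥ f x + u ⬝ᵥ (z - x)) (hu' : ∀ z, f z ≥ f x' + u' ⬝ᵥ (z - x')) :
    0 ≤ (u - u') ⬝ᵥ (x - x') := by
  have key : (u - u') ⬝ᵥ (x - x') =
      (f x' + f x) - ((f x + u ⬝ᵥ (x' - x)) + (f x' + u' ⬝ᵥ (x - x'))) := by
    simp only [sub_dotProduct, dotProduct_sub]
    ring
  rw [key, sub_nonneg]
  exact add_le_add (hu x') (hu' x)

theorem Matrix.add_transpose_mulVec_sub_dotProduct {ι κ R : Type*} [Fintype ι] [Fintype κ]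
    [CommRing R] (A : Matrix κ ι R) (u u' d : ι → R) (γ γ' : κ → R) :
    (u + Aᵀ *ᵥ γ - (u' + Aᵀ *ᵥ γ')) ⬝ᵥ d = (u - u') ⬝ᵥ d + (γ - γ') ⬝ᵥ (A *ᵥ d) := by
  rw [add_sub_add_comm, ← mulVec_sub, add_dotProduct, mulVec_transpose, dotProduct_mulVec]

theorem stmt1_general (n p m : ℕ)
    (f : (Fin n → ℝ) → ℝ) (g : (Fin p → ℝ) → ℝ)
    (A : Matrix (Fin m) (Fin n) ℝ) (B : Matrix (Fin m) (Fin p) ℝ) (b : Fin m → ℝ)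
    (x x' : Fin n → ℝ) (y y' : Fin p → ℝ) (γ γ' : Fin m → ℝ)
    (u u' : Fin n → ℝ) (v v' : Fin p → ℝ)
    (hu : ∀ z, f z ≥ f x + (u + Aᵀ *ᵥ γ) ⬝ᵥ (z - x))
    (hu' : ∀ z, f z ≥ f x' + (u' + Aᵀ *ᵥ γ') ⬝ᵥ (z - x'))
    (hv : ∀ z, g z ≥ g y + (v + Bᵀ *ᵥ γ) ⬝ᵥ (z - y))
    (hv' : ∀ z, g z ≥ g y' + (v' + Bᵀ *ᵥ γ') ⬝ᵥ (z - y'))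
    (w w' : Fin m → ℝ)
    (hw : w = A *ᵥ x + B *ᵥ y - b) (hw' : w' = A *ᵥ x' + B *ᵥ y' - b) :
    (u - u') ⬝ᵥ (x - x') + (v - v') ⬝ᵥ (y - y') + (w - w') ⬝ᵥ (γ - γ') ≥ 0 := by
  have hfx := dotProduct_sub_sub_nonneg_of_subgradient hu hu'
  have hgy := dotProduct_sub_sub_nonneg_of_subgradient hv hv'
  rw [add_transpose_mulVec_sub_dotProduct] at hfx hgy
  have hww' : w - w' = A *ᵥ (x - x') + B *ᵥ (y - y') := by
    rw [hw, hw', mulVec_sub, mulVec_sub]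
    abel
  rw [hww', dotProduct_comm _ (γ - γ'), dotProduct_add]
  linarith

/-- Monotonicity of the ADMM operator
`T(x,y,γ) = (∂f(x) − Aᵀγ, ∂g(y) − Bᵀγ, Ax + By − b)`. -/
theorem stmt1 (n p m : ℕ)
    (f : (Fin n → ℝ) → ℝ) (g : (Fin p → ℝ) → ℝ)
    (hf : ConvexOn ℝ Set.univ f) (hg : ConvexOn ℝ Set.univ g)
    (A : Matrix (Fin m) (Fin n) ℝ) (B : Matrix (Fin m) (Fin p) ℝ) (b : Fin m → ℝ)
    (x x' : Fin n → ℝ) (y y' : Fin p → ℝ) (γ γ' : Fin m → ℝ)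
    (u u' : Fin n → ℝ) (v v' : Fin p → ℝ)
    (hu : ∀ z, f z ≥ f x + (u + Aᵀ *ᵥ γ) ⬝ᵥ (z - x))
    (hu' : ∀ z, f z ≥ f x' + (u' + Aᵀ *ᵥ γ') ⬝ᵥ (z - x'))
    (hv : ∀ z, g z ≥ g y + (v + Bᵀ *ᵥ γ) ⬝ᵥ (z - y))
    (hv' : ∀ z, g z ≥ g y' + (v' + Bᵀ *ᵥ γ') ⬝ᵥ (z - y'))
    (w w' : Fin m → ℝ)
    (hw : w = A *ᵥ x + B *ᵥ y - b) (hw' : w' = A *ᵥ x' + B *ᵥ y' - b) :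
    (u - u') ⬝ᵥ (x - x') + (v - v') ⬝ᵥ (y - y') + (w - w') ⬝ᵥ (γ - γ') ≥ 0 :=
  stmt1_general n p m f g A B b x x' y y' γ γ' u u' v v' hu hu' hv hv' w w' hw hw'
end

section
/- Let g : ℝ^p → ℝ be convex, let H ∈ ℝ^{p×p}, B ∈ ℝ^{m×p}, A ∈ ℝ^{m×n}, b ∈ ℝ^m, β > 0, and τ, θ ∈ ℝ with τ + θ ≠ 0. Let x̃ ∈ ℝ^n, y_{k−1}, y_k ∈ ℝ^p, γ_{k−1} ∈ ℝ^m, and define γ̃ = γ_{k−1} − β(Ax̃ + By_{k−1} − b), γ_{k−1/2} = γ_{k−1} − τβ(Ax̃ + By_{k−1} − b), and γ_k = γ_{k−1/2} − θβ(Ax̃ + By_k − b). If Bᵀ[γ_{k−1/2} − β(Ax̃ + By_k − b)] − H(y_k − y_{k−1}) is a subgradient of g at y_k (the first-order optimality condition of the y-subproblem), then the vector v := (H + ((τ − τθ + θ)β/(τ+θ))BᵀB)(y_{k−1} − y_k) − (τ/(τ+θ))Bᵀ(γ_{k−1} − γ_k) is such that v + Bᵀγ̃ is a subgradient of g at y_k.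 -/
open Matrix

/-! With the residuals `r₀ = Ax̃ + By_{k−1} − b` and `r₁ = Ax̃ + By_k − b` one has
`B(y_{k−1} − y_k) = r₀ − r₁` and `γ_{k−1} − γ_k = τβ r₀ + θβ r₁`, so `v` equals
`Bᵀ((1 − τ)β r₀ − β r₁) − H(y_k − y_{k−1})`; adding `Bᵀγ̃` turns this into exactly the subgradient
given by the optimality condition of the `y`-subproblem. -/

theorem symmetric_admm_correction_eq {V : Type*} [AddCommGroup V] [Module ℝ V]
    {β τ θ : ℝ} (h : τ + θ ≠ 0) (r₀ r₁ : V) :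
    ((τ - τ * θ + θ) * β / (τ + θ)) • (r₀ - r₁) - (τ / (τ + θ)) • ((τ * β) • r₀ + (θ * β) • r₁)
      = ((1 - τ) * β) • r₀ - β • r₁ := by
  match_scalars <;> field_simp <;> ring

theorem stmt5_general (n p m : ℕ)
    (g : (Fin p → ℝ) → ℝ)
    (H : Matrix (Fin p) (Fin p) ℝ)
    (B : Matrix (Fin m) (Fin p) ℝ) (A : Matrix (Fin m) (Fin n) ℝ) (b : Fin m → ℝ)
    (β τ θ : ℝ) (hτθ : τ + θ ≠ 0)
    (xt : Fin n → ℝ) (ykm1 yk : Fin p → ℝ) (γkm1 : Fin m → ℝ)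
    (γt γhalf γk : Fin m → ℝ)
    (hγt : γt = γkm1 - β • (A *ᵥ xt + B *ᵥ ykm1 - b))
    (hγhalf : γhalf = γkm1 - (τ * β) • (A *ᵥ xt + B *ᵥ ykm1 - b))
    (hγk : γk = γhalf - (θ * β) • (A *ᵥ xt + B *ᵥ yk - b))
    (hopt : ∀ z, g z ≥ g yk +
      (Bᵀ *ᵥ (γhalf - β • (A *ᵥ xt + B *ᵥ yk - b)) - H *ᵥ (yk - ykm1)) ⬝ᵥ (z - yk))
    (v : Fin p → ℝ)
    (hv : v = (H + ((τ - τ * θ + θ) * β / (τ + θ)) • (Bᵀ * B)) *ᵥ (ykm1 - yk)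
              - (τ / (τ + θ)) • (Bᵀ *ᵥ (γkm1 - γk))) :
    ∀ z, g z ≥ g yk + (v + Bᵀ *ᵥ γt) ⬝ᵥ (z - yk) := by
  set r₀ := A *ᵥ xt + B *ᵥ ykm1 - b
  set r₁ := A *ᵥ xt + B *ᵥ yk - b
  have hB : B *ᵥ (ykm1 - yk) = r₀ - r₁ := by
    simp only [r₀, r₁, mulVec_sub]
    abel
  have hγ : γkm1 - γk = (τ * β) • r₀ + (θ * β) • r₁ := by
    rw [hγk, hγhalf]
    abel
  have hv_residuals : v = Bᵀ *ᵥ (((1 - τ) * β) • r₀ - β • r₁) - H *ᵥ (yk - ykm1) := by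
    rw [hv, hγ, add_mulVec, smul_mulVec, ← mulVec_mulVec, hB, ← mulVec_smul, ← mulVec_smul,
      add_sub_assoc, ← mulVec_sub, symmetric_admm_correction_eq hτθ, ← neg_sub yk, mulVec_neg]
    abel
  have hsubgrad : v + Bᵀ *ᵥ γt = Bᵀ *ᵥ (γhalf - β • r₁) - H *ᵥ (yk - ykm1) := by
    rw [hv_residuals, hγt, hγhalf, sub_add_eq_add_sub, ← mulVec_add]
    congr 2
    module
  simpa only [hsubgrad] using hopt

/-- From the first-order optimality condition of the `y`-subproblem,
the vector `v = (H + ((τ−τθ+θ)β/(τ+θ))BᵀB)(y_{k−1}−y_k) − (τ/(τ+θ))Bᵀ(γ_{k−1}−γ_k)`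
satisfies `v + Bᵀγ̃ ∈ ∂g(y_k)`. -/
theorem stmt5 (n p m : ℕ)
    (g : (Fin p → ℝ) → ℝ) (hg : ConvexOn ℝ Set.univ g)
    (H : Matrix (Fin p) (Fin p) ℝ)
    (B : Matrix (Fin m) (Fin p) ℝ) (A : Matrix (Fin m) (Fin n) ℝ) (b : Fin m → ℝ)
    (β τ θ : ℝ) (hβ : 0 < β) (hτθ : τ + θ ≠ 0)
    (xt : Fin n → ℝ) (ykm1 yk : Fin p → ℝ) (γkm1 : Fin m → ℝ)
    (γt γhalf γk : Fin m → ℝ)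
    (hγt : γt = γkm1 - β • (A *ᵥ xt + B *ᵥ ykm1 - b))
    (hγhalf : γhalf = γkm1 - (τ * β) • (A *ᵥ xt + B *ᵥ ykm1 - b))
    (hγk : γk = γhalf - (θ * β) • (A *ᵥ xt + B *ᵥ yk - b))
    (hopt : ∀ z, g z ≥ g yk +
      (Bᵀ *ᵥ (γhalf - β • (A *ᵥ xt + B *ᵥ yk - b)) - H *ᵥ (yk - ykm1)) ⬝ᵥ (z - yk))
    (v : Fin p → ℝ)
    (hv : v = (H + ((τ - τ * θ + θ) * β / (τ + θ)) • (Bᵀ * B)) *ᵥ (ykm1 - yk)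
              - (τ / (τ + θ)) • (Bᵀ *ᵥ (γkm1 - γk))) :
    ∀ z, g z ≥ g yk + (v + Bᵀ *ᵥ γt) ⬝ᵥ (z - yk) :=
  stmt5_general n p m g H B A b β τ θ hτθ xt ykm1 yk γkm1 γt γhalf γk hγt hγhalf hγk hopt v hv
end

section
/- Let M ∈ ℝ^{N×N} be symmetric positive semidefinite and let T : ℝ^N → Set(ℝ^N) be a monotone set-valued operator, i.e. ⟨w − w', z − z'⟩ ≥ 0 whenever w ∈ T(z) and w' ∈ T(z'). Let z*, z_{k−1}, z_k, z̃_k ∈ ℝ^N satisfy 0 ∈ T(z*) and M(z_{k−1} − z_k) ∈ T(z̃_k). Then ‖z* − z_k‖_M² − ‖z* − z_{k−1}‖_M² ≤ ‖z̃_k − z_k‖_M² − ‖z̃_k − z_{k−1}‖_M². -/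
open Matrix

namespace Matrix

variable {n R : Type*} [Fintype n]

theorem IsSymm.mulVec_dotProduct_comm [CommSemiring R] {A : Matrix n n R} (hA : A.IsSymm)
    (x y : n → R) : (A *ᵥ x) ⬝ᵥ y = (A *ᵥ y) ⬝ᵥ x := by
  rw [dotProduct_comm, dotProduct_mulVec, ← mulVec_transpose, hA.eq]

theorem IsSymm.four_point_identity [CommRing R] {A : Matrix n n R} (hA : A.IsSymm)
    (a b c d : n → R) :
    (A *ᵥ (a - c)) ⬝ᵥ (a - c) - (A *ᵥ (a - b)) ⬝ᵥ (a - b)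
        - ((A *ᵥ (d - c)) ⬝ᵥ (d - c) - (A *ᵥ (d - b)) ⬝ᵥ (d - b))
      = -2 * (A *ᵥ (b - c)) ⬝ᵥ (d - a) := by
  simp only [mulVec_sub, sub_dotProduct, dotProduct_sub]
  rw [hA.mulVec_dotProduct_comm c a, hA.mulVec_dotProduct_comm b a,
    hA.mulVec_dotProduct_comm c d, hA.mulVec_dotProduct_comm b d]
  ring

end Matrix

/-- For a symmetric PSD matrix `M` and monotone set-valued operator `T`
with `0 ∈ T(z*)` and `M(z_{k−1} − z_k) ∈ T(z̃_k)`, one has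
`‖z*−z_k‖_M² − ‖z*−z_{k−1}‖_M² ≤ ‖z̃_k−z_k‖_M² − ‖z̃_k−z_{k−1}‖_M²`. -/
theorem stmt6 (N : ℕ) (M : Matrix (Fin N) (Fin N) ℝ) (hM : M.PosSemidef)
    (T : (Fin N → ℝ) → Set (Fin N → ℝ))
    (hT : ∀ z z' w w', w ∈ T z → w' ∈ T z' → 0 ≤ (w - w') ⬝ᵥ (z - z'))
    (zs zkm1 zk zt : Fin N → ℝ)
    (hzs : (0 : Fin N → ℝ) ∈ T zs)
    (hincl : M *ᵥ (zkm1 - zk) ∈ T zt) :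
    (M *ᵥ (zs - zk)) ⬝ᵥ (zs - zk) - (M *ᵥ (zs - zkm1)) ⬝ᵥ (zs - zkm1)
      ≤ (M *ᵥ (zt - zk)) ⬝ᵥ (zt - zk) - (M *ᵥ (zt - zkm1)) ⬝ᵥ (zt - zkm1) := by
  have hsymm : M.IsSymm := isHermitian_iff_isSymm.mp hM.isHermitian
  have hmono : 0 ≤ (M *ᵥ (zkm1 - zk)) ⬝ᵥ (zt - zs) := by
    simpa only [sub_zero] using hT zt zs _ 0 hincl hzs
  linarith [hsymm.four_point_identity zs zkm1 zk zt]
end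

section
/- Let β > 0, σ̃ ∈ [0,1), and let (τ, θ) belong to the region R_σ̃, i.e. τ ∈ (−1, 1−σ̃), τ + θ > 0, and (1−τ²)(2−τ−θ−σ̃) − (1−θ)²(1−τ−σ̃) > 0. Define ϑ = √((3−3τ−2σ̃)(4−τ−θ−2σ̃)) − 2(1−τ−σ̃). Then ϑ > 0, the 2×2 matrix [[(3−3τ−2σ̃)β, 2(1−τ−σ̃)], [2(1−τ−σ̃), (4−τ−θ−2σ̃)/β]] is symmetric positive definite, and for all vectors y, γ ∈ ℝ^m one has (3−3τ−2σ̃)β‖y‖² + 4(1−τ−σ̃)⟨y, γ⟩ + ((4−τ−θ−2σ̃)/β)‖γ‖² ≥ −2ϑ⟨y, γ⟩. -/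
/-!
With `a = 3 - 3τ - 2σ̃`, `b = 2(1 - τ - σ̃)` and `c = 4 - τ - θ - 2σ̃`, everything follows from
`b² < ac`: this is the determinant condition for the matrix, gives `ϑ = √(ac) - b > 0`, and
`aβ‖y‖² + 2√(ac)⟨y, γ⟩ + (c/β)‖γ‖² = ‖√(aβ) y + √(c/β) γ‖² ≥ 0` is the vector inequality.
-/

open Matrix

lemma sq_lt_of_cubic_lt {u p w s : ℝ} (hu : 0 < u) (hp : 0 < p) (hw : 0 < w) (hs : 0 ≤ s)
    (h : (w - u) ^ 2 * u < p * (u + s) * w) :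
    u ^ 2 < 3 * u * p + 3 * u * w + s * (u + p + w) := by
  rcases le_or_gt u (3 * w) with hw3 | hw3
  · nlinarith [mul_pos hu hp, mul_nonneg hs (add_pos (add_pos hu hp) hw).le]
  · nlinarith [mul_pos hu hp, mul_nonneg hs hp.le, mul_nonneg hs hu.le, mul_nonneg hs hw.le,
      mul_pos hu hw, mul_pos (mul_pos hu hp) hw]

section Region

variable {σt τ θ : ℝ} (hσt0 : 0 ≤ σt) (hτl : -1 < τ) (hτu : τ < 1 - σt)
  (hreg : (1 - τ ^ 2) * (2 - τ - θ - σt) - (1 - θ) ^ 2 * (1 - τ - σt) > 0)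
include hσt0 hτl hτu hreg

lemma two_sub_pos_of_region : 0 < 2 - τ - θ - σt := by
  have hu : 0 < 1 - τ - σt := by linarith
  have : 0 < (1 + τ) * (1 - τ) := mul_pos (by linarith) (by linarith)
  nlinarith [mul_nonneg (sq_nonneg (1 - θ)) hu.le]

lemma sq_lt_mul_of_region :
    (2 * (1 - τ - σt)) ^ 2 < (3 - 3 * τ - 2 * σt) * (4 - τ - θ - 2 * σt) := by
  -- `u = 1 - τ - σ̃`, `p = 1 + τ`, `w = 2 - τ - θ - σ̃` turn the region into the cubic condition
  have := sq_lt_of_cubic_lt (u := 1 - τ - σt) (p := 1 + τ) (by linarith) (by linarith)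
    (two_sub_pos_of_region hσt0 hτl hτu hreg) hσt0 (by nlinarith)
  nlinarith

end Region

lemma posDef_of_sq_lt_mul {A B C : ℝ} (hA : 0 < A) (hB : B ^ 2 < A * C) :
    (!![A, B; B, C]).PosDef := by
  refine posDef_iff_dotProduct_mulVec.2 ⟨?_, fun x hx => ?_⟩
  · ext i j
    fin_cases i <;> fin_cases j <;> rfl
  · have hform : star x ⬝ᵥ (!![A, B; B, C] *ᵥ x) * A
        = (A * x 0 + B * x 1) ^ 2 + (A * C - B ^ 2) * x 1 ^ 2 := by
      simp [dotProduct, mulVec, Fin.sum_univ_two]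
      ring
    refine pos_of_mul_pos_left (hform ▸ ?_) hA.le
    rcases eq_or_ne (x 1) 0 with h1 | h1
    · have h0 : x 0 ≠ 0 := fun h0 => hx (by ext i; fin_cases i <;> simp [h0, h1])
      simpa [h1] using sq_pos_of_ne_zero (mul_ne_zero hA.ne' h0)
    · have := sub_pos.2 hB
      positivity

lemma add_two_sqrt_mul_dotProduct_nonneg {ι : Type*} [Fintype ι] {A C : ℝ} (hA : 0 ≤ A)
    (hC : 0 ≤ C) (y γ : ι → ℝ) :
    0 ≤ A * (y ⬝ᵥ y) + 2 * √(A * C) * (y ⬝ᵥ γ) + C * (γ ⬝ᵥ γ) := by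
  have h := dotProduct_self_star_nonneg (√A • y + √C • γ)
  simp only [star_trivial, dotProduct_add, add_dotProduct, dotProduct_smul, smul_dotProduct,
    smul_eq_mul, dotProduct_comm γ y] at h
  rw [Real.sqrt_mul hA]
  refine h.trans_eq ?_
  linear_combination (y ⬝ᵥ y) * Real.mul_self_sqrt hA + (γ ⬝ᵥ γ) * Real.mul_self_sqrt hC

theorem stmt7_general (m : ℕ) (β σt τ θ : ℝ) (hβ : 0 < β) (hσt0 : 0 ≤ σt)
    (hτl : -1 < τ) (hτu : τ < 1 - σt)
    (hreg : (1 - τ ^ 2) * (2 - τ - θ - σt) - (1 - θ) ^ 2 * (1 - τ - σt) > 0)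
    (ϑ : ℝ)
    (hϑ : ϑ = Real.sqrt ((3 - 3 * τ - 2 * σt) * (4 - τ - θ - 2 * σt))
              - 2 * (1 - τ - σt)) :
    0 < ϑ ∧
    (Matrix.PosDef
      !![(3 - 3 * τ - 2 * σt) * β, 2 * (1 - τ - σt);
         2 * (1 - τ - σt), (4 - τ - θ - 2 * σt) / β]) ∧
    ∀ (y γ : Fin m → ℝ),
      (3 - 3 * τ - 2 * σt) * β * (y ⬝ᵥ y) + 4 * (1 - τ - σt) * (y ⬝ᵥ γ)
        + ((4 - τ - θ - 2 * σt) / β) * (γ ⬝ᵥ γ) ≥ -(2 * ϑ) * (y ⬝ᵥ γ) := by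
  have ha : 0 < 3 - 3 * τ - 2 * σt := by linarith
  have hc : 0 < 4 - τ - θ - 2 * σt := by linarith [two_sub_pos_of_region hσt0 hτl hτu hreg]
  have hdet := sq_lt_mul_of_region hσt0 hτl hτu hreg
  have hβ_cancel : (3 - 3 * τ - 2 * σt) * β * ((4 - τ - θ - 2 * σt) / β)
      = (3 - 3 * τ - 2 * σt) * (4 - τ - θ - 2 * σt) := by
    field_simp
  refine ⟨?_, posDef_of_sq_lt_mul (mul_pos ha hβ) (hβ_cancel ▸ hdet), fun y γ => ?_⟩
  · rw [hϑ, sub_pos]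
    exact (Real.lt_sqrt (by linarith)).2 hdet
  · have := add_two_sqrt_mul_dotProduct_nonneg (mul_pos ha hβ).le (div_pos hc hβ).le y γ
    rw [hβ_cancel] at this
    rw [hϑ]
    linarith

/-- For `(τ,θ)` in the region `R_σ̃`, the scalar
`ϑ = √((3−3τ−2σ̃)(4−τ−θ−2σ̃)) − 2(1−τ−σ̃)` is positive, the 2×2 matrix `Q̂` is
symmetric positive definite, and the associated quadratic form dominates `−2ϑ⟨y,γ⟩`. -/
theorem stmt7 (m : ℕ) (β σt τ θ : ℝ) (hβ : 0 < β) (hσt0 : 0 ≤ σt) (hσt1 : σt < 1)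
    (hτl : -1 < τ) (hτu : τ < 1 - σt) (hτθ : 0 < τ + θ)
    (hreg : (1 - τ ^ 2) * (2 - τ - θ - σt) - (1 - θ) ^ 2 * (1 - τ - σt) > 0)
    (ϑ : ℝ)
    (hϑ : ϑ = Real.sqrt ((3 - 3 * τ - 2 * σt) * (4 - τ - θ - 2 * σt))
              - 2 * (1 - τ - σt)) :
    0 < ϑ ∧
    (Matrix.PosDef
      !![(3 - 3 * τ - 2 * σt) * β, 2 * (1 - τ - σt);
         2 * (1 - τ - σt), (4 - τ - θ - 2 * σt) / β]) ∧
    ∀ (y γ : Fin m → ℝ),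
      (3 - 3 * τ - 2 * σt) * β * (y ⬝ᵥ y) + 4 * (1 - τ - σt) * (y ⬝ᵥ γ)
        + ((4 - τ - θ - 2 * σt) / β) * (γ ⬝ᵥ γ) ≥ -(2 * ϑ) * (y ⬝ᵥ γ) :=
  stmt7_general m β σt τ θ hβ hσt0 hτl hτu hreg ϑ hϑ
end

section
/- Let σ̃ ∈ [0,1), σ̂ ∈ [0,1), and let (τ, θ) belong to the region R_σ̃, i.e. τ ∈ (−1, 1−σ̃), τ + θ > 0, and (1−τ²)(2−τ−θ−σ̃) − (1−θ)²(1−τ−σ̃) > 0. Define φ(σ) = (1−τ)(σ−1) + (1−τ−σ̃)(τ+θ), φ̂(σ) = (1−τ)[(1+θ)σ − 1 + τ] − σ̃(τ+θ), φ̃(σ) = σ − (1−τ−θ)² − σ̃(τ+θ), and φ̄(σ) = [(1+τ)φ̂(σ) − 2τφ(σ)](1+τ)φ̃(σ) − (1−θ)²(φ(σ))². Then there exists σ ∈ [σ̂, 1) such that φ(σ) ≥ 0, φ̂(σ) ≥ 0, φ̃(σ) > 0, and φ̄(σ) ≥ 0. -/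
/-!
At `σ = 1` the four functions factor as
`φ 1 = φ̂ 1 = (1 - τ - σ̃)(τ + θ)`, `φ̃ 1 = (τ + θ)(2 - τ - θ - σ̃)` and
`φ̄ 1 = (τ + θ)² (1 - τ - σ̃) R`, where `R > 0` is the expression defining `R_σ̃`;
all factors are positive on `R_σ̃`. By continuity the four functions stay positive on a
left neighbourhood of `1`, which meets `[σ̂, 1)`.
-/

open Filter Topology

lemma exists_mem_Ico_of_eventually_nhdsLT {p : ℝ → Prop} {a b : ℝ} (hba : b < a)
    (h : ∀ᶠ x in 𝓝[<] a, p x) : ∃ x, b ≤ x ∧ x < a ∧ p x :=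
  let ⟨x, hp, hx⟩ := (h.and (Ioo_mem_nhdsLT hba)).exists
  ⟨x, hx.1.le, hx.2, hp⟩

lemma Continuous.eventually_pos_nhdsLT {f : ℝ → ℝ} (hf : Continuous f) {a : ℝ}
    (ha : 0 < f a) : ∀ᶠ x in 𝓝[<] a, 0 < f x :=
  (hf.continuousAt.eventually_const_lt ha).filter_mono nhdsWithin_le_nhds

theorem stmt8_general (σt σh τ θ : ℝ) (hσt0 : 0 ≤ σt)
    (hσh1 : σh < 1)
    (hτl : -1 < τ) (hτu : τ < 1 - σt) (hτθ : 0 < τ + θ)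
    (hreg : (1 - τ ^ 2) * (2 - τ - θ - σt) - (1 - θ) ^ 2 * (1 - τ - σt) > 0)
    (φ φh φt φb : ℝ → ℝ)
    (hφ : ∀ σ, φ σ = (1 - τ) * (σ - 1) + (1 - τ - σt) * (τ + θ))
    (hφh : ∀ σ, φh σ = (1 - τ) * ((1 + θ) * σ - 1 + τ) - σt * (τ + θ))
    (hφt : ∀ σ, φt σ = σ - (1 - τ - θ) ^ 2 - σt * (τ + θ))
    (hφb : ∀ σ, φb σ = ((1 + τ) * φh σ - 2 * τ * φ σ) * ((1 + τ) * φt σ)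
                        - (1 - θ) ^ 2 * (φ σ) ^ 2) :
    ∃ σ : ℝ, σh ≤ σ ∧ σ < 1 ∧ 0 ≤ φ σ ∧ 0 ≤ φh σ ∧ 0 < φt σ ∧ 0 ≤ φb σ := by
  have hB : 0 < 1 - τ - σt := by linarith
  have hA : 0 < 1 - τ ^ 2 := by nlinarith
  have hC : 0 < 2 - τ - θ - σt := by nlinarith [sq_nonneg (1 - θ)]
  have hφ1 : 0 < φ 1 := by rw [hφ]; nlinarith [mul_pos hB hτθ]
  have hφh1 : 0 < φh 1 := by rw [hφh]; nlinarith [mul_pos hB hτθ]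
  have hφt1 : 0 < φt 1 := by rw [hφt]; nlinarith [mul_pos hτθ hC]
  have hφb1 : 0 < φb 1 := by
    have : φb 1 = (τ + θ) ^ 2 * (1 - τ - σt) *
        ((1 - τ ^ 2) * (2 - τ - θ - σt) - (1 - θ) ^ 2 * (1 - τ - σt)) := by
      rw [hφb, hφh, hφ, hφt]; ring
    rw [this]; positivity
  have hφc : Continuous φ := by rw [funext hφ]; fun_prop
  have hφhc : Continuous φh := by rw [funext hφh]; fun_prop
  have hφtc : Continuous φt := by rw [funext hφt]; fun_prop
  have hφbc : Continuous φb := by rw [funext hφb]; fun_prop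
  obtain ⟨σ, hσh, hσ1, h, hh, ht, hb⟩ := exists_mem_Ico_of_eventually_nhdsLT hσh1
    ((hφc.eventually_pos_nhdsLT hφ1).and <| (hφhc.eventually_pos_nhdsLT hφh1).and <|
      (hφtc.eventually_pos_nhdsLT hφt1).and (hφbc.eventually_pos_nhdsLT hφb1))
  exact ⟨σ, hσh, hσ1, h.le, hh.le, ht, hb.le⟩

/-- Existence of `σ ∈ [σ̂, 1)` making the four auxiliary functions
`φ, φ̂, φ̃, φ̄` have the required signs, for `(τ,θ)` in the region `R_σ̃`. -/
theorem stmt8 (σt σh τ θ : ℝ) (hσt0 : 0 ≤ σt) (hσt1 : σt < 1)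
    (hσh0 : 0 ≤ σh) (hσh1 : σh < 1)
    (hτl : -1 < τ) (hτu : τ < 1 - σt) (hτθ : 0 < τ + θ)
    (hreg : (1 - τ ^ 2) * (2 - τ - θ - σt) - (1 - θ) ^ 2 * (1 - τ - σt) > 0)
    (φ φh φt φb : ℝ → ℝ)
    (hφ : ∀ σ, φ σ = (1 - τ) * (σ - 1) + (1 - τ - σt) * (τ + θ))
    (hφh : ∀ σ, φh σ = (1 - τ) * ((1 + θ) * σ - 1 + τ) - σt * (τ + θ))
    (hφt : ∀ σ, φt σ = σ - (1 - τ - θ) ^ 2 - σt * (τ + θ))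
    (hφb : ∀ σ, φb σ = ((1 + τ) * φh σ - 2 * τ * φ σ) * ((1 + τ) * φt σ)
                        - (1 - θ) ^ 2 * (φ σ) ^ 2) :
    ∃ σ : ℝ, σh ≤ σ ∧ σ < 1 ∧ 0 ≤ φ σ ∧ 0 ≤ φh σ ∧ 0 < φt σ ∧ 0 ≤ φb σ :=
  stmt8_general σt σh τ θ hσt0 hσh1 hτl hτu hτθ hreg φ φh φt φb hφ hφh hφt hφb
end

section
/- Let g : ℝ^p → ℝ be convex, H ∈ ℝ^{p×p} symmetric positive semidefinite, B ∈ ℝ^{m×p}, β > 0, and τ, θ ∈ ℝ. Let y_{k−2}, y_{k−1}, y_k ∈ ℝ^p, γ_{k−1}, γ_k ∈ ℝ^m, q_{k−1}, q_k ∈ ℝ^m, and set p_k = B(y_k − y_{k−1}). Assume: (i) Bᵀ[γ_k + (1−θ)q_k] − H(y_k − y_{k−1}) is a subgradient of g at y_k; (ii) Bᵀ[γ_{k−1} + (1−θ)q_{k−1}] − H(y_{k−1} − y_{k−2}) is a subgradient of g at y_{k−1}; (iii) γ_k − γ_{k−1} = τβ p_k + (τ+θ) q_k. Then 2(1+τ)⟨p_k,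 q_k⟩ ≥ 2(1−θ)⟨p_k, q_{k−1}⟩ − 2τβ‖p_k‖² + ‖y_k − y_{k−1}‖_H² − ‖y_{k−1} − y_{k−2}‖_H². -/
/-!
Monotonicity of the subdifferential, applied to the two subgradients of `g` at `y_k` and
`y_{k-1}` along `y_k - y_{k-1}`, gives the inequality once `γ_k - γ_{k-1}` is eliminated by
(iii), except that the last term appears as the cross term
`2⟨H(y_{k-1} - y_{k-2}), y_k - y_{k-1}⟩`. Positive semidefiniteness of `H` bounds this cross
term by the sum of the two squared `H`-norms.
-/

open Matrix

theorem dotProduct_sub_nonneg_of_subgradient {n : Type*} [Fintype n] {f : (n → ℝ) → ℝ}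
    {x y u v : n → ℝ} (hu : ∀ z, f z ≥ f x + u ⬝ᵥ (z - x))
    (hv : ∀ z, f z ≥ f y + v ⬝ᵥ (z - y)) : 0 ≤ (u - v) ⬝ᵥ (x - y) := by
  have hxy := hu y
  have hyx := hv x
  rw [← neg_sub x y, dotProduct_neg] at hxy
  rw [sub_dotProduct]
  linarith

section

variable {n : Type*} [Fintype n] {H : Matrix n n ℝ}

theorem Matrix.IsHermitian.mulVec_dotProduct_comm (hH : H.IsHermitian) (x y : n → ℝ) :
    (H *ᵥ x) ⬝ᵥ y = (H *ᵥ y) ⬝ᵥ x := by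
  rw [dotProduct_comm, dotProduct_mulVec, ← mulVec_transpose,
    ← conjTranspose_eq_transpose_of_trivial, hH.eq]

namespace Matrix.PosSemidef

theorem two_mul_mulVec_dotProduct_le (hH : H.PosSemidef) (x y : n → ℝ) :
    2 * ((H *ᵥ y) ⬝ᵥ x) ≤ (H *ᵥ x) ⬝ᵥ x + (H *ᵥ y) ⬝ᵥ y := by
  have h := hH.dotProduct_mulVec_nonneg (x - y)
  simp only [star_trivial, mulVec_sub, dotProduct_sub, sub_dotProduct] at h
  rw [dotProduct_comm x, dotProduct_comm y (H *ᵥ x), dotProduct_comm y (H *ᵥ y),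
    dotProduct_comm x, hH.1.mulVec_dotProduct_comm x y] at h
  linarith

end Matrix.PosSemidef

end

theorem stmt13_general (p_ m : ℕ)
    (g : (Fin p_ → ℝ) → ℝ)
    (H : Matrix (Fin p_) (Fin p_) ℝ) (hH : H.PosSemidef)
    (B : Matrix (Fin m) (Fin p_) ℝ)
    (β τ θ : ℝ)
    (ykm2 ykm1 yk : Fin p_ → ℝ) (γkm1 γk qkm1 qk : Fin m → ℝ)
    (pk : Fin m → ℝ) (hpk : pk = B *ᵥ (yk - ykm1))
    (hopt1 : ∀ z, g z ≥ g yk +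
      (Bᵀ *ᵥ (γk + (1 - θ) • qk) - H *ᵥ (yk - ykm1)) ⬝ᵥ (z - yk))
    (hopt2 : ∀ z, g z ≥ g ykm1 +
      (Bᵀ *ᵥ (γkm1 + (1 - θ) • qkm1) - H *ᵥ (ykm1 - ykm2)) ⬝ᵥ (z - ykm1))
    (hγ : γk - γkm1 = (τ * β) • pk + (τ + θ) • qk) :
    2 * (1 + τ) * (pk ⬝ᵥ qk)
      ≥ 2 * (1 - θ) * (pk ⬝ᵥ qkm1) - 2 * τ * β * (pk ⬝ᵥ pk)
        + (H *ᵥ (yk - ykm1)) ⬝ᵥ (yk - ykm1)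
        - (H *ᵥ (ykm1 - ykm2)) ⬝ᵥ (ykm1 - ykm2) := by
  have hmono := dotProduct_sub_nonneg_of_subgradient hopt1 hopt2
  have hdual : ∀ v, (Bᵀ *ᵥ v) ⬝ᵥ (yk - ykm1) = v ⬝ᵥ pk := fun v => by
    rw [hpk, mulVec_transpose, dotProduct_mulVec]
  have hγp := congrArg (· ⬝ᵥ pk) hγ
  simp only [sub_dotProduct, add_dotProduct, smul_dotProduct, smul_eq_mul] at hγp
  simp only [sub_dotProduct, hdual, add_dotProduct,
    smul_dotProduct, smul_eq_mul] at hmono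
  have hH2 := hH.two_mul_mulVec_dotProduct_le (yk - ykm1) (ykm1 - ykm2)
  rw [dotProduct_comm pk qk, dotProduct_comm pk qkm1]
  linarith

/-- Key inequality obtained from the monotonicity of `∂g` applied to
consecutive optimality conditions of the `y`-subproblem. -/
theorem stmt13 (p_ m : ℕ)
    (g : (Fin p_ → ℝ) → ℝ) (hg : ConvexOn ℝ Set.univ g)
    (H : Matrix (Fin p_) (Fin p_) ℝ) (hH : H.PosSemidef)
    (B : Matrix (Fin m) (Fin p_) ℝ)
    (β τ θ : ℝ) (hβ : 0 < β)
    (ykm2 ykm1 yk : Fin p_ → ℝ) (γkm1 γk qkm1 qk : Fin m → ℝ)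
    (pk : Fin m → ℝ) (hpk : pk = B *ᵥ (yk - ykm1))
    (hopt1 : ∀ z, g z ≥ g yk +
      (Bᵀ *ᵥ (γk + (1 - θ) • qk) - H *ᵥ (yk - ykm1)) ⬝ᵥ (z - yk))
    (hopt2 : ∀ z, g z ≥ g ykm1 +
      (Bᵀ *ᵥ (γkm1 + (1 - θ) • qkm1) - H *ᵥ (ykm1 - ykm2)) ⬝ᵥ (z - ykm1))
    (hγ : γk - γkm1 = (τ * β) • pk + (τ + θ) • qk) :
    2 * (1 + τ) * (pk ⬝ᵥ qk)
      ≥ 2 * (1 - θ) * (pk ⬝ᵥ qkm1) - 2 * τ * β * (pk ⬝ᵥ pk)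
        + (H *ᵥ (yk - ykm1)) ⬝ᵥ (yk - ykm1)
        - (H *ᵥ (ykm1 - ykm2)) ⬝ᵥ (ykm1 - ykm2) :=
  stmt13_general p_ m g H hH B β τ θ ykm2 ykm1 yk γkm1 γk qkm1 qk pk hpk hopt1 hopt2 hγ
end

section
/- Let M ∈ ℝ^{N×N} be symmetric positive semidefinite and λ ≥ 0 satisfy ‖Mv‖² ≤ λ⟨Mv, v⟩ for all v ∈ ℝ^N (e.g., λ the largest eigenvalue of M). Let T : ℝ^N → Set(ℝ^N) be monotone (⟨w − w', z − z'⟩ ≥ 0 whenever w ∈ T(z), w' ∈ T(z')), let z* satisfy 0 ∈ T(z*), let σ ∈ [0,1), and let sequences (z_k)_{k≥0}, (z̃_k)_{k≥1} in ℝ^N and nonnegative reals (η_k)_{k≥0} satisfy, for every k ≥ 1, M(z_{k−1} − z_k) ∈ T(z̃_k) and ‖z̃_k − z_k‖_M² + η_k ≤ σ‖z̃_k − z_{k−1}‖_M² + η_{k−1}. Then for every k ≥ 1, Σ_{l=1}^{k} ‖M(z_{l−1} − z_l)‖² ≤ (2λ/(1−σ))[(1+σ)‖z* − z_0‖_M²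 + 2η_0]; in particular there exists i ∈ {1,…,k} with ‖M(z_{i−1} − z_i)‖ ≤ √((2λ/((1−σ)k))[(1+σ)‖z* − z_0‖_M² + 2η_0]). -/
/-!
Along the iteration the potential `(1 + σ) ‖z* - z_l‖²_M + 2 η_l` decreases, and each decrease pays
for the residual: monotonicity of `T` at the pair `(z̃_l, z*)` together with the HPE error
condition gives `(1 - σ) ‖z̃_l - z_{l-1}‖²_M ≤ Φ_{l-1} - Φ_l` for `Φ_l = ‖z* - z_l‖²_M + η_l`, while
`‖M r‖² ≤ λ ‖r‖²_M` and the parallelogram law bound the residual `r = z_{l-1} - z_l` by the same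
quantities. Summing telescopes; the best of `k` residuals is at most their average.
-/

open Matrix Finset

theorem Finset.sum_Icc_le_sub_of_le_sub_pred {α : Type*} [AddCommGroup α] [PartialOrder α]
    [IsOrderedAddMonoid α] {a f : ℕ → α} (h : ∀ l, 1 ≤ l → a l ≤ f (l - 1) - f l) (k : ℕ) :
    ∑ l ∈ Icc 1 k, a l ≤ f 0 - f k := by
  induction k with
  | zero => simp
  | succ k ih =>
    rw [sum_Icc_succ_top (by omega)]
    calc ∑ l ∈ Icc 1 k, a l + a (k + 1) ≤ (f 0 - f k) + (f k - f (k + 1)) :=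
          add_le_add ih (h (k + 1) (by omega))
      _ = f 0 - f (k + 1) := sub_add_sub_cancel _ _ _

namespace Matrix

variable {n : Type*} [Fintype n]

theorem IsSymm.mulVec_dotProduct_comm_s15 {R : Type*} [CommSemiring R] {M : Matrix n n R}
    (hM : M.IsSymm) (u v : n → R) : (M *ᵥ u) ⬝ᵥ v = (M *ᵥ v) ⬝ᵥ u := by
  rw [dotProduct_comm, dotProduct_mulVec, ← mulVec_transpose, hM.eq]

theorem mulVec_dotProduct_parallelogram {R : Type*} [CommRing R] (M : Matrix n n R)
    (a b : n → R) :
    (M *ᵥ (a - b)) ⬝ᵥ (a - b) + (M *ᵥ (a + b)) ⬝ᵥ (a + b)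
      = 2 * ((M *ᵥ a) ⬝ᵥ a) + 2 * ((M *ᵥ b) ⬝ᵥ b) := by
  simp only [mulVec_sub, mulVec_add, sub_dotProduct, add_dotProduct, dotProduct_sub,
    dotProduct_add]
  ring

variable {M : Matrix n n ℝ}

theorem PosSemidef.mulVec_dotProduct_self_nonneg_s15 (hM : M.PosSemidef) (v : n → ℝ) :
    0 ≤ (M *ᵥ v) ⬝ᵥ v := by
  simpa [dotProduct_comm] using hM.dotProduct_mulVec_nonneg v

theorem PosSemidef.mulVec_dotProduct_sub_le (hM : M.PosSemidef) (a b : n → ℝ) :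
    (M *ᵥ (a - b)) ⬝ᵥ (a - b) ≤ 2 * ((M *ᵥ a) ⬝ᵥ a) + 2 * ((M *ᵥ b) ⬝ᵥ b) := by
  linarith [M.mulVec_dotProduct_parallelogram a b, hM.mulVec_dotProduct_self_nonneg_s15 (a + b)]

theorem IsSymm.mulVec_dotProduct_three_point (hM : M.IsSymm) (s t x y : n → ℝ) :
    (M *ᵥ (s - x)) ⬝ᵥ (s - x) - (M *ᵥ (s - y)) ⬝ᵥ (s - y)
      = (M *ᵥ (t - x)) ⬝ᵥ (t - x) - (M *ᵥ (t - y)) ⬝ᵥ (t - y)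
        + 2 * ((M *ᵥ (x - y)) ⬝ᵥ (t - s)) := by
  simp only [mulVec_sub, sub_dotProduct, dotProduct_sub]
  rw [hM.mulVec_dotProduct_comm_s15 x s, hM.mulVec_dotProduct_comm_s15 y s,
    hM.mulVec_dotProduct_comm_s15 x t, hM.mulVec_dotProduct_comm_s15 y t]
  ring

end Matrix

def IsMonotoneOperator {n : Type*} [Fintype n] (T : (n → ℝ) → Set (n → ℝ)) : Prop :=
  ∀ z z' w w', w ∈ T z → w' ∈ T z' → 0 ≤ (w - w') ⬝ᵥ (z - z')

section HPEStep

/-! One step `x ↦ y` of the scheme, with extragradient point `t`, solution `s` and errors `η ↦ η'`. -/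

variable {n : Type*} [Fintype n] {M : Matrix n n ℝ} {T : (n → ℝ) → Set (n → ℝ)}
  {s t x y : n → ℝ} {σ lam η η' : ℝ}

theorem hpe_step_descent (hM : M.IsSymm) (hT : IsMonotoneOperator T)
    (hv : M *ᵥ (x - y) ∈ T t) (hs : 0 ∈ T s)
    (hpe : (M *ᵥ (t - y)) ⬝ᵥ (t - y) + η' ≤ σ * ((M *ᵥ (t - x)) ⬝ᵥ (t - x)) + η) :
    (1 - σ) * ((M *ᵥ (t - x)) ⬝ᵥ (t - x))
      ≤ ((M *ᵥ (s - x)) ⬝ᵥ (s - x) + η) - ((M *ᵥ (s - y)) ⬝ᵥ (s - y) + η') := by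
  have hmono := hT _ _ _ _ hv hs
  rw [sub_zero] at hmono
  linarith [hM.mulVec_dotProduct_three_point s t x y]

theorem hpe_step_residual (hM : M.PosSemidef) (hlam0 : 0 ≤ lam)
    (hlam : ∀ v : n → ℝ, (M *ᵥ v) ⬝ᵥ (M *ᵥ v) ≤ lam * ((M *ᵥ v) ⬝ᵥ v))
    (hpe : (M *ᵥ (t - y)) ⬝ᵥ (t - y) + η' ≤ σ * ((M *ᵥ (t - x)) ⬝ᵥ (t - x)) + η) :
    (M *ᵥ (x - y)) ⬝ᵥ (M *ᵥ (x - y))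
      ≤ lam * (2 * (1 + σ) * ((M *ᵥ (t - x)) ⬝ᵥ (t - x)) + 2 * (η - η')) := by
  have hsplit := hM.mulVec_dotProduct_sub_le (t - y) (t - x)
  rw [sub_sub_sub_cancel_left] at hsplit
  calc (M *ᵥ (x - y)) ⬝ᵥ (M *ᵥ (x - y)) ≤ lam * ((M *ᵥ (x - y)) ⬝ᵥ (x - y)) := hlam _
    _ ≤ _ := mul_le_mul_of_nonneg_left (by linarith) hlam0

theorem hpe_step_potential (hM : M.PosSemidef) (hT : IsMonotoneOperator T)
    (hv : M *ᵥ (x - y) ∈ T t) (hs : 0 ∈ T s) (hσ0 : 0 ≤ σ) (hσ1 : σ < 1) (hlam0 : 0 ≤ lam)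
    (hlam : ∀ v : n → ℝ, (M *ᵥ v) ⬝ᵥ (M *ᵥ v) ≤ lam * ((M *ᵥ v) ⬝ᵥ v))
    (hpe : (M *ᵥ (t - y)) ⬝ᵥ (t - y) + η' ≤ σ * ((M *ᵥ (t - x)) ⬝ᵥ (t - x)) + η) :
    (M *ᵥ (x - y)) ⬝ᵥ (M *ᵥ (x - y))
      ≤ 2 * lam / (1 - σ) * ((1 + σ) * ((M *ᵥ (s - x)) ⬝ᵥ (s - x)) + 2 * η)
        - 2 * lam / (1 - σ) * ((1 + σ) * ((M *ᵥ (s - y)) ⬝ᵥ (s - y)) + 2 * η') := by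
  have hσ : 0 < 1 - σ := by linarith
  have hdescent := mul_le_mul_of_nonneg_left
    (hpe_step_descent (s := s) (isHermitian_iff_isSymm.1 hM.isHermitian) hT hv hs hpe)
    (by positivity : 0 ≤ 2 * lam * (1 + σ))
  have hresidual := mul_le_mul_of_nonneg_left (hpe_step_residual hM hlam0 hlam hpe) hσ.le
  rw [div_mul_eq_mul_div, div_mul_eq_mul_div, div_sub_div_same, le_div_iff₀ hσ]
  linarith

end HPEStep

/-- Pointwise bound for the HPE-type scheme: the sum of residual
norms squared is bounded, and hence some iterate has small residual. -/
theorem stmt15 (N : ℕ) (M : Matrix (Fin N) (Fin N) ℝ) (hM : M.PosSemidef)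
    (lam : ℝ) (hlam0 : 0 ≤ lam)
    (hlam : ∀ v : Fin N → ℝ, (M *ᵥ v) ⬝ᵥ (M *ᵥ v) ≤ lam * ((M *ᵥ v) ⬝ᵥ v))
    (T : (Fin N → ℝ) → Set (Fin N → ℝ))
    (hT : ∀ z z' w w', w ∈ T z → w' ∈ T z' → 0 ≤ (w - w') ⬝ᵥ (z - z'))
    (zs : Fin N → ℝ) (hzs : (0 : Fin N → ℝ) ∈ T zs)
    (σ : ℝ) (hσ0 : 0 ≤ σ) (hσ1 : σ < 1)
    (z : ℕ → Fin N → ℝ) (zt : ℕ → Fin N → ℝ) (η : ℕ → ℝ) (hη : ∀ k, 0 ≤ η k)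
    (hincl : ∀ k, 1 ≤ k → M *ᵥ (z (k - 1) - z k) ∈ T (zt k))
    (hhpe : ∀ k, 1 ≤ k →
      (M *ᵥ (zt k - z k)) ⬝ᵥ (zt k - z k) + η k
        ≤ σ * ((M *ᵥ (zt k - z (k - 1))) ⬝ᵥ (zt k - z (k - 1))) + η (k - 1)) :
    ∀ k : ℕ, 1 ≤ k →
      (∑ l ∈ Finset.Icc 1 k,
          (M *ᵥ (z (l - 1) - z l)) ⬝ᵥ (M *ᵥ (z (l - 1) - z l)))
        ≤ (2 * lam / (1 - σ)) *
            ((1 + σ) * ((M *ᵥ (zs - z 0)) ⬝ᵥ (zs - z 0)) + 2 * η 0)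
      ∧ ∃ i ∈ Finset.Icc 1 k,
          Real.sqrt ((M *ᵥ (z (i - 1) - z i)) ⬝ᵥ (M *ᵥ (z (i - 1) - z i)))
            ≤ Real.sqrt ((2 * lam / ((1 - σ) * k)) *
                ((1 + σ) * ((M *ᵥ (zs - z 0)) ⬝ᵥ (zs - z 0)) + 2 * η 0)) := by
  intro k hk
  set P : ℕ → ℝ := fun l ↦
    2 * lam / (1 - σ) * ((1 + σ) * ((M *ᵥ (zs - z l)) ⬝ᵥ (zs - z l)) + 2 * η l)
  have hP : 0 ≤ P k := by
    have := hM.mulVec_dotProduct_self_nonneg_s15 (zs - z k)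
    have := hη k
    have : 0 < 1 - σ := by linarith
    positivity
  have hsum := (Finset.sum_Icc_le_sub_of_le_sub_pred (f := P) (fun l hl ↦
    hpe_step_potential hM hT (hincl l hl) hzs hσ0 hσ1 hlam0 hlam (hhpe l hl)) k).trans
    (sub_le_self _ hP)
  refine ⟨hsum, ?_⟩
  have hcard : ((Icc 1 k).card : ℝ) = k := by simp
  obtain ⟨i, hi, hle⟩ := exists_le_of_expect_le (a := P 0 / k) (nonempty_Icc.2 hk)
    (by rw [expect_eq_sum_div_card, hcard]; gcongr)
  refine ⟨i, hi, Real.sqrt_le_sqrt (hle.trans_eq ?_)⟩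
  simp only [P, ← div_div]
  ring
end

section
/- Let M ∈ ℝ^{N×N} be symmetric positive semidefinite, let T : ℝ^N → Set(ℝ^N) be monotone (⟨w − w', z − z'⟩ ≥ 0 whenever w ∈ T(z), w' ∈ T(z')), let z* satisfy 0 ∈ T(z*), let σ ∈ [0,1), and let sequences (z_k)_{k≥0}, (z̃_k)_{k≥1} in ℝ^N and nonnegative reals (η_k)_{k≥0} satisfy, for every k ≥ 1, M(z_{k−1} − z_k) ∈ T(z̃_k) and ‖z̃_k − z_k‖_M² + η_k ≤ σ‖z̃_k − z_{k−1}‖_M² + η_{k−1}. Then for every k ≥ 1, ‖z* − z_k‖_M² + η_k ≤ ‖z* − z_{k−1}‖_M² + (σ − 1)‖z̃_k − z_{k−1}‖_M² + η_{k−1} ≤ ‖z* − z_{k−1}‖_M² + η_{k−1}; consequently (1−σ)‖z̃_k − z_{k−1}‖_M² ≤ ‖z* − z_0‖_M² + η_0 for every k ≥ 1. -/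
open Matrix

/-! Monotonicity of `T` at the pair `(z̃_k, z_{k-1} - z_k)`, `(z*, 0)` gives
`⟨M(z_{k-1} - z_k), z̃_k - z*⟩ ≥ 0`, and the four-point identity for the quadratic form of a
symmetric `M` turns this into
`‖z* - z_k‖_M² ≤ ‖z* - z_{k-1}‖_M² - ‖z̃_k - z_{k-1}‖_M² + ‖z̃_k - z_k‖_M²`.
The relative error criterion bounds the last term, which yields the one-step inequality;
summing it telescopically (the quantity `‖z* - z_k‖_M² + η_k` is nonincreasing) gives the
bound in terms of the initial data. -/

section QuadraticForm

variable {n R : Type*} [Fintype n] [CommRing R] {M : Matrix n n R}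

theorem Matrix.IsSymm.mulVec_dotProduct_comm_s16 (hM : M.IsSymm) (u v : n → R) :
    (M *ᵥ u) ⬝ᵥ v = (M *ᵥ v) ⬝ᵥ u := by
  rw [dotProduct_comm, dotProduct_comm (M *ᵥ v), ← dotProduct_transpose_mulVec, hM.eq]

theorem Matrix.IsSymm.mulVec_sub_dotProduct_sub (hM : M.IsSymm) (s a b t : n → R) :
    (M *ᵥ (s - b)) ⬝ᵥ (s - b)
      = (M *ᵥ (s - a)) ⬝ᵥ (s - a) - (M *ᵥ (t - a)) ⬝ᵥ (t - a)
        + (M *ᵥ (t - b)) ⬝ᵥ (t - b) - 2 * ((M *ᵥ (a - b)) ⬝ᵥ (t - s)) := by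
  simp only [mulVec_sub, sub_dotProduct, dotProduct_sub]
  linear_combination hM.mulVec_dotProduct_comm_s16 b s + hM.mulVec_dotProduct_comm_s16 s a
    + hM.mulVec_dotProduct_comm_s16 a t + hM.mulVec_dotProduct_comm_s16 t b

theorem Matrix.IsSymm.mulVec_sub_dotProduct_sub_add_le [LinearOrder R] [IsStrictOrderedRing R]
    (hM : M.IsSymm) {s a b t : n → R} {σ η η' : R}
    (hmono : 0 ≤ (M *ᵥ (a - b)) ⬝ᵥ (t - s))
    (herr : (M *ᵥ (t - b)) ⬝ᵥ (t - b) + η' ≤ σ * ((M *ᵥ (t - a)) ⬝ᵥ (t - a)) + η) :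
    (M *ᵥ (s - b)) ⬝ᵥ (s - b) + η'
      ≤ (M *ᵥ (s - a)) ⬝ᵥ (s - a) + (σ - 1) * ((M *ᵥ (t - a)) ⬝ᵥ (t - a)) + η := by
  rw [hM.mulVec_sub_dotProduct_sub s a b t]
  linarith

end QuadraticForm

theorem stmt16_general (N : ℕ) (M : Matrix (Fin N) (Fin N) ℝ) (hM : M.PosSemidef)
    (T : (Fin N → ℝ) → Set (Fin N → ℝ))
    (hT : ∀ z z' w w', w ∈ T z → w' ∈ T z' → 0 ≤ (w - w') ⬝ᵥ (z - z'))
    (zs : Fin N → ℝ) (hzs : (0 : Fin N → ℝ) ∈ T zs)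
    (σ : ℝ) (hσ1 : σ < 1)
    (z : ℕ → Fin N → ℝ) (zt : ℕ → Fin N → ℝ) (η : ℕ → ℝ) (hη : ∀ k, 0 ≤ η k)
    (hincl : ∀ k, 1 ≤ k → M *ᵥ (z (k - 1) - z k) ∈ T (zt k))
    (hhpe : ∀ k, 1 ≤ k →
      (M *ᵥ (zt k - z k)) ⬝ᵥ (zt k - z k) + η k
        ≤ σ * ((M *ᵥ (zt k - z (k - 1))) ⬝ᵥ (zt k - z (k - 1))) + η (k - 1)) :
    ∀ k : ℕ, 1 ≤ k →
      ((M *ᵥ (zs - z k)) ⬝ᵥ (zs - z k) + η k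
          ≤ (M *ᵥ (zs - z (k - 1))) ⬝ᵥ (zs - z (k - 1))
            + (σ - 1) * ((M *ᵥ (zt k - z (k - 1))) ⬝ᵥ (zt k - z (k - 1)))
            + η (k - 1)
        ∧ (M *ᵥ (zs - z (k - 1))) ⬝ᵥ (zs - z (k - 1))
            + (σ - 1) * ((M *ᵥ (zt k - z (k - 1))) ⬝ᵥ (zt k - z (k - 1)))
            + η (k - 1)
          ≤ (M *ᵥ (zs - z (k - 1))) ⬝ᵥ (zs - z (k - 1)) + η (k - 1))
      ∧ (1 - σ) * ((M *ᵥ (zt k - z (k - 1))) ⬝ᵥ (zt k - z (k - 1)))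
          ≤ (M *ᵥ (zs - z 0)) ⬝ᵥ (zs - z 0) + η 0 := by
  have hsymm : M.IsSymm := isHermitian_iff_isSymm.mp hM.isHermitian
  have hq (v : Fin N → ℝ) : 0 ≤ (M *ᵥ v) ⬝ᵥ v := by
    simpa [dotProduct_comm] using hM.dotProduct_mulVec_nonneg v
  have hstep (k : ℕ) (hk : 1 ≤ k) := hsymm.mulVec_sub_dotProduct_sub_add_le
    (by simpa using hT _ _ _ _ (hincl k hk) hzs) (hhpe k hk)
  have hneg (k : ℕ) : (σ - 1) * ((M *ᵥ (zt k - z (k - 1))) ⬝ᵥ (zt k - z (k - 1))) ≤ 0 :=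
    mul_nonpos_of_nonpos_of_nonneg (by linarith) (hq _)
  have hanti : Antitone fun k ↦ (M *ᵥ (zs - z k)) ⬝ᵥ (zs - z k) + η k :=
    antitone_nat_of_succ_le fun k ↦ by
      have h := hstep (k + 1) k.succ_pos
      have h' := hneg (k + 1)
      simp only [Nat.add_sub_cancel] at h h'
      linarith
  intro k hk
  refine ⟨⟨hstep k hk, by linarith [hneg k]⟩, ?_⟩
  linarith [hstep k hk, hanti (Nat.zero_le (k - 1)), hq (zs - z k), hη k]

/-- Fejér-type monotonicity of `‖z* − z_k‖_M² + η_k` and the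
resulting bound `(1−σ)‖z̃_k − z_{k−1}‖_M² ≤ ‖z* − z_0‖_M² + η_0`. -/
theorem stmt16 (N : ℕ) (M : Matrix (Fin N) (Fin N) ℝ) (hM : M.PosSemidef)
    (T : (Fin N → ℝ) → Set (Fin N → ℝ))
    (hT : ∀ z z' w w', w ∈ T z → w' ∈ T z' → 0 ≤ (w - w') ⬝ᵥ (z - z'))
    (zs : Fin N → ℝ) (hzs : (0 : Fin N → ℝ) ∈ T zs)
    (σ : ℝ) (hσ0 : 0 ≤ σ) (hσ1 : σ < 1)
    (z : ℕ → Fin N → ℝ) (zt : ℕ → Fin N → ℝ) (η : ℕ → ℝ) (hη : ∀ k, 0 ≤ η k)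
    (hincl : ∀ k, 1 ≤ k → M *ᵥ (z (k - 1) - z k) ∈ T (zt k))
    (hhpe : ∀ k, 1 ≤ k →
      (M *ᵥ (zt k - z k)) ⬝ᵥ (zt k - z k) + η k
        ≤ σ * ((M *ᵥ (zt k - z (k - 1))) ⬝ᵥ (zt k - z (k - 1))) + η (k - 1)) :
    ∀ k : ℕ, 1 ≤ k →
      ((M *ᵥ (zs - z k)) ⬝ᵥ (zs - z k) + η k
          ≤ (M *ᵥ (zs - z (k - 1))) ⬝ᵥ (zs - z (k - 1))
            + (σ - 1) * ((M *ᵥ (zt k - z (k - 1))) ⬝ᵥ (zt k - z (k - 1)))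
            + η (k - 1)
        ∧ (M *ᵥ (zs - z (k - 1))) ⬝ᵥ (zs - z (k - 1))
            + (σ - 1) * ((M *ᵥ (zt k - z (k - 1))) ⬝ᵥ (zt k - z (k - 1)))
            + η (k - 1)
          ≤ (M *ᵥ (zs - z (k - 1))) ⬝ᵥ (zs - z (k - 1)) + η (k - 1))
      ∧ (1 - σ) * ((M *ᵥ (zt k - z (k - 1))) ⬝ᵥ (zt k - z (k - 1)))
          ≤ (M *ᵥ (zs - z 0)) ⬝ᵥ (zs - z 0) + η 0 :=
  stmt16_general N M hM T hT zs hzs σ hσ1 z zt η hη hincl hhpe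
end
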